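/- If X has the RTGLE(α,β,γ,p) distribution, then E[(αX + βX²/2)^r] = (1 + pr/γ)·Γ(r/γ + 1) for every real r ≥ 0, where Γ is the gamma function. -/

import Mathlib

open MeasureTheory

/-- The RTGLE probability density function. -/
noncomputable def rtglePDF (α β γ p : ℝ) (x : ℝ) : ℝ :=
  γ * (α + β * x) * (α * x + β * x ^ 2 / 2) ^ (γ - 1) *
    (1 - p + p * (α * x + β * x ^ 2 / 2) ^ γ) *
    Real.exp (-(α * x + β * x ^ 2 / 2) ^ γ)

/-! The substitution `y = αx + βx²/2`, increasing from `0` to `∞` with derivative `α + βx`,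
turns the moment into `∫ y^r γ y^(γ-1) (1 - p + p y^γ) e^(-y^γ) dy` over `y > 0`, which splits
into two Gamma integrals: `(1 - p) Γ(r/γ + 1) + p Γ(r/γ + 2)`. -/

open Real Set Filter

-- The cumulative hazard of the linear exponential distribution, whose hazard rate is `α + β x`.
noncomputable def linExpCumHazard (α β x : ℝ) : ℝ := α * x + β * x ^ 2 / 2

noncomputable def rtgleCumHazardPDF (γ p y : ℝ) : ℝ :=
  γ * y ^ (γ - 1) * (1 - p + p * y ^ γ) * exp (-y ^ γ)

section linExpCumHazard

variable {α β : ℝ}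

theorem hasDerivAt_linExpCumHazard (x : ℝ) :
    HasDerivAt (linExpCumHazard α β) (α + β * x) x := by
  have h := ((hasDerivAt_id' x).const_mul α).add (((hasDerivAt_pow 2 x).const_mul β).div_const 2)
  have hderiv : α * 1 + β * (↑2 * x ^ (2 - 1)) / 2 = α + β * x := by norm_num; ring
  exact hderiv ▸ h

theorem continuous_linExpCumHazard : Continuous (linExpCumHazard α β) := by
  unfold linExpCumHazard; fun_prop

variable (hα : 0 ≤ α) (hβ : 0 ≤ β) (hαβ : 0 < α + β)
include hα hβ hαβ

theorem strictMonoOn_linExpCumHazard : StrictMonoOn (linExpCumHazard α β) (Ici 0) := by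
  intro x (hx : 0 ≤ x) y (hy : 0 ≤ y) hxy
  have hfactor : 0 < α + β * (x + y) / 2 := by
    rcases hα.lt_or_eq with hα' | rfl
    · positivity
    · have : 0 < x + y := by linarith
      simp only [zero_add] at hαβ ⊢; positivity
  have hdiff : linExpCumHazard α β y - linExpCumHazard α β x
      = (y - x) * (α + β * (x + y) / 2) := by
    unfold linExpCumHazard; ring
  linarith [mul_pos (sub_pos.2 hxy) hfactor]

theorem tendsto_linExpCumHazard_atTop : Tendsto (linExpCumHazard α β) atTop atTop := by
  refine tendsto_atTop_mono' atTop ?_ (tendsto_id.const_mul_atTop (half_pos hαβ))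
  filter_upwards [eventually_ge_atTop 1] with x hx
  have hx2 : x ≤ x ^ 2 := by nlinarith
  simp only [id, linExpCumHazard]
  nlinarith [mul_le_mul_of_nonneg_left hx2 hβ]

theorem image_linExpCumHazard_Ioi : linExpCumHazard α β '' Ioi 0 = Ioi 0 := by
  simpa [linExpCumHazard] using continuous_linExpCumHazard.continuousOn.image_Ioi_of_strictMonoOn
    (strictMonoOn_linExpCumHazard hα hβ hαβ) (tendsto_linExpCumHazard_atTop hα hβ hαβ)

end linExpCumHazard

theorem rtglePDF_eq_mul_rtgleCumHazardPDF (α β γ p x : ℝ) :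
    rtglePDF α β γ p x = (α + β * x) * rtgleCumHazardPDF γ p (linExpCumHazard α β x) := by
  unfold rtglePDF rtgleCumHazardPDF linExpCumHazard; ring

theorem integral_rpow_mul_rtgleCumHazardPDF {γ p r : ℝ} (hγ : 0 < γ) (hr : -γ < r) :
    ∫ y in Ioi 0, y ^ r * rtgleCumHazardPDF γ p y = (1 + p * r / γ) * Gamma (r / γ + 1) := by
  have h₁ : -1 < r + γ - 1 := by linarith
  have h₂ : -1 < r + 2 * γ - 1 := by linarith
  have hsplit : EqOn (fun y => y ^ r * rtgleCumHazardPDF γ p y)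
      (fun y => (1 - p) * γ * (y ^ (r + γ - 1) * exp (-y ^ γ))
        + p * γ * (y ^ (r + 2 * γ - 1) * exp (-y ^ γ))) (Ioi 0) := by
    intro y (hy : 0 < y)
    have e₁ : y ^ (r + γ - 1) = y ^ r * y ^ (γ - 1) := by
      rw [← rpow_add hy]; ring_nf
    have e₂ : y ^ (r + 2 * γ - 1) = y ^ r * y ^ (γ - 1) * y ^ γ := by
      rw [← rpow_add hy, ← rpow_add hy]; ring_nf
    simp only [rtgleCumHazardPDF, e₁, e₂]; ring
  rw [setIntegral_congr_fun measurableSet_Ioi hsplit, integral_add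
    ((integrableOn_rpow_mul_exp_neg_rpow h₁ hγ).const_mul _)
    ((integrableOn_rpow_mul_exp_neg_rpow h₂ hγ).const_mul _),
    integral_const_mul, integral_const_mul, integral_rpow_mul_exp_neg_rpow hγ h₁,
    integral_rpow_mul_exp_neg_rpow hγ h₂]
  have hΓ₁ : (r + γ - 1 + 1) / γ = r / γ + 1 := by field_simp; ring
  have hΓ₂ : (r + 2 * γ - 1 + 1) / γ = r / γ + 1 + 1 := by field_simp; ring
  have hne : r / γ + 1 ≠ 0 := by
    have : -1 < r / γ := by rw [lt_div_iff₀ hγ]; linarith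
    linarith
  rw [hΓ₁, hΓ₂, Gamma_add_one hne]
  field_simp
  ring

theorem rtgle_power_moment (α β γ p r : ℝ) (hα : 0 ≤ α) (hβ : 0 ≤ β)
    (hαβ : ¬(α = 0 ∧ β = 0)) (hγ : 0 < γ) (hr : 0 ≤ r) :
    ∫ x in Set.Ioi (0 : ℝ), (α * x + β * x ^ 2 / 2) ^ r * rtglePDF α β γ p x
      = (1 + p * r / γ) * Real.Gamma (r / γ + 1) := by
  have hαβ' : 0 < α + β := by
    by_contra! h
    exact hαβ ⟨by linarith, by linarith⟩
  calc ∫ x in Ioi 0, (α * x + β * x ^ 2 / 2) ^ r * rtglePDF α β γ p x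
      = ∫ x in Ioi 0, (α + β * x) •
          (linExpCumHazard α β x ^ r * rtgleCumHazardPDF γ p (linExpCumHazard α β x)) := by
        refine setIntegral_congr_fun measurableSet_Ioi fun x _ => ?_
        simp only [rtglePDF_eq_mul_rtgleCumHazardPDF, smul_eq_mul, linExpCumHazard]
        ring
    _ = ∫ y in linExpCumHazard α β '' Ioi 0, y ^ r * rtgleCumHazardPDF γ p y :=
        (integral_image_eq_integral_deriv_smul_of_monotoneOn measurableSet_Ioi
          (fun x _ => (hasDerivAt_linExpCumHazard x).hasDerivWithinAt)
          ((strictMonoOn_linExpCumHazard hα hβ hαβ').monotoneOn.mono Ioi_subset_Ici_self)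
          (fun y => y ^ r * rtgleCumHazardPDF γ p y)).symm
    _ = (1 + p * r / γ) * Real.Gamma (r / γ + 1) := by
        rw [image_linExpCumHazard_Ioi hα hβ hαβ']
        exact integral_rpow_mul_rtgleCumHazardPDF hγ (by linarith)
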